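/- arXiv:math/0311094 — 3 statements merged into one kernel-verified Lean document; each statement's English description precedes it below -/
import Mathlib

section
/- For a Schwartz function w on ℝ, ‖ŵ‖_{L^1} ≤ C ‖w‖_{L^2}^{1/2} ‖∂_x w‖_{L^2}^{1/2}, where ŵ is the Fourier transform of w and C is an absolute constant. -/
/-!
Cauchy–Schwarz against the Cauchy density of scale `a`, whose reciprocal is `π (a + ξ² / a)`,
gives `‖F‖₁² ≤ π (a ‖F‖₂² + a⁻¹ ‖ξ F‖₂²)`, and optimising over `a` gives
`‖F‖₁² ≤ 2π ‖F‖₂ ‖ξ F‖₂`. For `F = ŵ`, Plancherel gives `‖ŵ‖₂ = ‖w‖₂`, and `(w')^ = 2πiξ ŵ`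
gives `2π ‖ξ ŵ‖₂ = ‖w'‖₂`, so the constant `1` works.
-/

open MeasureTheory FourierTransform Real
open scoped ENNReal NNReal

theorem le_two_mul_mul_of_forall_le_mul_sq_add_inv_mul_sq {x α γ : ℝ} (hα : 0 ≤ α) (hγ : 0 ≤ γ)
    (h : ∀ a > 0, x ≤ a * α ^ 2 + a⁻¹ * γ ^ 2) : x ≤ 2 * α * γ := by
  rcases hα.eq_or_lt with rfl | hα
  · by_contra! hx
    have hx : 0 < x := by linarith
    have := h ((γ ^ 2 + 1) / x) (by positivity)
    rw [zero_pow two_ne_zero, mul_zero, zero_add, inv_div, div_mul_eq_mul_div,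
      le_div_iff₀ (by positivity)] at this
    nlinarith
  rcases hγ.eq_or_lt with rfl | hγ
  · by_contra! hx
    have hx : 0 < x := by linarith
    have := h (x / (α ^ 2 + 1)) (by positivity)
    rw [zero_pow two_ne_zero, mul_zero, add_zero, div_mul_eq_mul_div,
      le_div_iff₀ (by positivity)] at this
    nlinarith
  have := h (γ / α) (by positivity)
  rw [inv_div] at this
  convert this using 1
  field

theorem ENNReal.le_two_mul_mul_of_forall_le_mul_sq_add_inv_mul_sq {x α γ : ℝ≥0∞} (hα : α ≠ ∞)
    (hγ : γ ≠ ∞) (h : ∀ a : ℝ≥0, a ≠ 0 → x ≤ a * α ^ 2 + (a : ℝ≥0∞)⁻¹ * γ ^ 2) :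
    x ≤ 2 * α * γ := by
  have hx : x ≠ ∞ := ne_top_of_le_ne_top (by finiteness) (h 1 one_ne_zero)
  rw [← ENNReal.toReal_le_toReal hx (by finiteness), ENNReal.toReal_mul, ENNReal.toReal_mul]
  refine _root_.le_two_mul_mul_of_forall_le_mul_sq_add_inv_mul_sq ENNReal.toReal_nonneg
    ENNReal.toReal_nonneg fun a ha ↦ ?_
  have ha' : (a.toNNReal : ℝ≥0∞) ≠ 0 := by simpa using ha
  have hγa : (a.toNNReal : ℝ≥0∞)⁻¹ * γ ^ 2 ≠ ∞ :=
    ENNReal.mul_ne_top (ENNReal.inv_ne_top.2 ha') (by finiteness)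
  have hle := ENNReal.toReal_mono (by finiteness) (h a.toNNReal (by simpa using ha))
  rwa [ENNReal.toReal_add (by finiteness) hγa, ENNReal.toReal_mul, ENNReal.toReal_mul,
    ENNReal.toReal_pow, ENNReal.toReal_pow, ENNReal.toReal_inv, ENNReal.coe_toReal,
    Real.coe_toNNReal _ ha.le] at hle

theorem sq_lintegral_le_lintegral_mul_lintegral_inv_mul_sq {Ω : Type*} [MeasurableSpace Ω]
    {μ : Measure Ω} {f g : Ω → ℝ≥0∞} (hf : AEMeasurable f μ) (hg : AEMeasurable g μ)
    (hg0 : ∀ᵐ x ∂μ, g x ≠ 0) (hgtop : ∀ᵐ x ∂μ, g x ≠ ∞) :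
    (∫⁻ x, f x ∂μ) ^ 2 ≤ (∫⁻ x, g x ∂μ) * ∫⁻ x, (g x)⁻¹ * f x ^ 2 ∂μ := by
  have hsplit : f =ᵐ[μ] (fun x ↦ g x ^ (2⁻¹ : ℝ)) * ((fun x ↦ g⁻¹ x ^ (2⁻¹ : ℝ)) * f) := by
    filter_upwards [hg0, hgtop] with x hx0 hxtop
    rw [Pi.mul_apply, Pi.mul_apply, ← mul_assoc, Pi.inv_apply,
      ← ENNReal.mul_rpow_of_nonneg _ _ (by norm_num), ENNReal.mul_inv_cancel hx0 hxtop,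
      ENNReal.one_rpow, one_mul]
  have holder := (lintegral_congr_ae hsplit).trans_le <|
    ENNReal.lintegral_mul_le_Lp_mul_Lq μ Real.HolderConjugate.two_two
      (hg.pow_const (2⁻¹ : ℝ)) ((hg.inv.pow_const (2⁻¹ : ℝ)).mul hf)
  refine (pow_le_pow_left₀ zero_le holder 2).trans_eq ?_
  simp only [Pi.mul_apply, Pi.inv_apply, ← ENNReal.rpow_mul,
    ENNReal.mul_rpow_of_nonneg _ _ zero_le_two]
  norm_num only [ENNReal.rpow_one, ENNReal.rpow_two]
  rw [mul_pow, ← ENNReal.rpow_two, ← ENNReal.rpow_two, ← ENNReal.rpow_mul, ← ENNReal.rpow_mul]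
  norm_num

theorem sq_eLpNorm_two {Ω ε : Type*} [MeasurableSpace Ω] [ENorm ε] {μ : Measure Ω}
    (f : Ω → ε) : eLpNorm f 2 μ ^ 2 = ∫⁻ x, ‖f x‖ₑ ^ 2 ∂μ := by
  simpa [ENNReal.rpow_two] using
    eLpNorm_nnreal_pow_eq_lintegral (f := f) (μ := μ) (p := 2) two_ne_zero

namespace ProbabilityTheory

theorem inv_ofReal_pi_mul_cauchyPDF {a : ℝ≥0} (ha : a ≠ 0) (ξ : ℝ) :
    (ENNReal.ofReal π * cauchyPDF 0 a ξ)⁻¹ = a + (a : ℝ≥0∞)⁻¹ * ‖ξ‖ₑ ^ 2 := by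
  have ha' : (0 : ℝ) < a := by positivity
  rw [cauchyPDF_def, cauchyPDFReal_def, ← ENNReal.ofReal_mul pi_pos.le,
    ← ENNReal.ofReal_inv_of_pos (by positivity), ← ENNReal.ofReal_coe_nnreal,
    ← ENNReal.ofReal_inv_of_pos ha', ← ofReal_norm, ← ENNReal.ofReal_pow (norm_nonneg _),
    ← ENNReal.ofReal_mul (by positivity), ← ENNReal.ofReal_add ha'.le (by positivity)]
  congr 1
  rw [Real.norm_eq_abs, sq_abs]
  field

end ProbabilityTheory

section Carlson

open ProbabilityTheory

variable {E : Type*} [NormedAddCommGroup E] [NormedSpace ℝ E] {F : ℝ → E}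

theorem sq_eLpNorm_one_le_pi_mul (hF : AEStronglyMeasurable F) {a : ℝ≥0} (ha : a ≠ 0) :
    eLpNorm F 1 volume ^ 2 ≤ ENNReal.ofReal π *
      (a * eLpNorm F 2 volume ^ 2 + (a : ℝ≥0∞)⁻¹ * eLpNorm (fun ξ ↦ ξ • F ξ) 2 volume ^ 2) := by
  have hcauchy : AEMeasurable (fun ξ ↦ ENNReal.ofReal π * cauchyPDF 0 a ξ) :=
    ((measurable_cauchyPDF 0 a).const_mul _).aemeasurable
  have hpos (ξ : ℝ) : cauchyPDF 0 a ξ ≠ 0 := (ENNReal.ofReal_pos.2 (cauchyPDF_pos 0 ha ξ)).ne'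
  have hCS := sq_lintegral_le_lintegral_mul_lintegral_inv_mul_sq hF.enorm hcauchy
    (ae_of_all _ fun ξ ↦ mul_ne_zero (by simp [pi_pos]) (hpos ξ))
    (ae_of_all _ fun ξ ↦ ENNReal.mul_ne_top ENNReal.ofReal_ne_top ENNReal.ofReal_ne_top)
  rw [lintegral_const_mul _ (measurable_cauchyPDF 0 a), lintegral_cauchyPDF_eq_one 0 ha, mul_one]
    at hCS
  simp only [inv_ofReal_pi_mul_cauchyPDF ha, add_mul, mul_assoc, ← mul_pow, ← enorm_smul] at hCS
  rwa [lintegral_add_left' ((hF.enorm.pow_const 2).const_mul _),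
    lintegral_const_mul' _ _ ENNReal.coe_ne_top,
    lintegral_const_mul' _ _ (ENNReal.inv_ne_top.2 (ENNReal.coe_ne_zero.2 ha)),
    ← sq_eLpNorm_two, ← sq_eLpNorm_two, ← eLpNorm_one_eq_lintegral_enorm] at hCS

theorem sq_eLpNorm_one_le_two_pi_mul (hF : MemLp F 2)
    (hξF : eLpNorm (fun ξ ↦ ξ • F ξ) 2 volume ≠ ∞) :
    eLpNorm F 1 volume ^ 2 ≤
      ENNReal.ofReal (2 * π) * eLpNorm F 2 volume * eLpNorm (fun ξ ↦ ξ • F ξ) 2 volume := by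
  have hπ : ENNReal.ofReal π ≠ 0 := by simp [pi_pos]
  have h := ENNReal.le_two_mul_mul_of_forall_le_mul_sq_add_inv_mul_sq hF.eLpNorm_ne_top hξF
    fun a ha ↦ ENNReal.div_le_of_le_mul' (sq_eLpNorm_one_le_pi_mul hF.1 ha)
  rw [ENNReal.div_le_iff hπ ENNReal.ofReal_ne_top] at h
  rw [ENNReal.ofReal_mul zero_le_two, ENNReal.ofReal_ofNat]
  convert h using 1
  ring

end Carlson

namespace SchwartzMap

variable {H : Type*} [NormedAddCommGroup H] [InnerProductSpace ℂ H] [CompleteSpace H]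

theorem coe_derivCLM {𝕜 F : Type*} [RCLike 𝕜] [NormedAddCommGroup F] [NormedSpace ℝ F]
    [NormedSpace 𝕜 F] [SMulCommClass ℝ 𝕜 F] (f : 𝓢(ℝ, F)) : ⇑(derivCLM 𝕜 F f) = deriv f :=
  funext (derivCLM_apply 𝕜 f)

theorem eLpNorm_fourier_two_eq {V : Type*} [NormedAddCommGroup V] [InnerProductSpace ℝ V]
    [FiniteDimensional ℝ V] [MeasurableSpace V] [BorelSpace V] (f : 𝓢(V, H)) :
    eLpNorm (𝓕 ⇑f) 2 volume = eLpNorm f 2 volume := by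
  have h := norm_fourier_toL2_eq f
  have hf𝓕 := ((𝓕 f : 𝓢(V, H)).memLp 2).eLpNorm_ne_top
  have hf := (f.memLp 2).eLpNorm_ne_top
  rw [norm_toLp, norm_toLp] at h
  rw [fourier_coe] at h hf𝓕
  exact (ENNReal.toReal_eq_toReal_iff' hf𝓕 hf).1 h

theorem eLpNorm_deriv_two_eq (f : 𝓢(ℝ, H)) :
    eLpNorm (deriv f) 2 volume =
      ENNReal.ofReal (2 * π) * eLpNorm (fun ξ ↦ ξ • 𝓕 ⇑f ξ) 2 volume := by
  have h𝓕 : 𝓕 (deriv ⇑f) = (2 * π * Complex.I) • fun ξ : ℝ ↦ ξ • 𝓕 ⇑f ξ := by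
    rw [Real.fourier_deriv f.integrable f.differentiable
      (coe_derivCLM (𝕜 := ℝ) f ▸ (derivCLM ℝ H f).integrable)]
    ext ξ
    simp [mul_smul, Complex.coe_smul]
  rw [← coe_derivCLM (𝕜 := ℝ), ← eLpNorm_fourier_two_eq, coe_derivCLM, h𝓕, eLpNorm_const_smul,
    ← ofReal_norm]
  simp [abs_of_pos pi_pos]

end SchwartzMap

theorem carlson_beurling :
    ∃ C > 0, ∀ w : SchwartzMap ℝ ℂ,
      eLpNorm (𝓕 (fun x : ℝ => w x)) 1 volume ≤
        ENNReal.ofReal C * eLpNorm (fun x : ℝ => w x) 2 volume ^ (1 / 2 : ℝ) *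
          eLpNorm (fun x : ℝ => deriv (fun y : ℝ => w y) x) 2 volume ^ (1 / 2 : ℝ) := by
  refine ⟨1, one_pos, fun w ↦ ?_⟩
  have hderiv := w.eLpNorm_deriv_two_eq
  have hξF : eLpNorm (fun ξ : ℝ ↦ ξ • 𝓕 ⇑w ξ) 2 volume ≠ ∞ := by
    have hfin := ((SchwartzMap.derivCLM ℝ ℂ w).memLp 2).eLpNorm_ne_top
    rw [SchwartzMap.coe_derivCLM, hderiv] at hfin
    exact (ENNReal.lt_top_of_mul_ne_top_right hfin (by simp [pi_pos])).ne
  have hF := ((𝓕 w : SchwartzMap ℝ ℂ).memLp 2)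
  rw [SchwartzMap.fourier_coe] at hF
  have h := sq_eLpNorm_one_le_two_pi_mul hF hξF
  rw [mul_right_comm, ← hderiv, w.eLpNorm_fourier_two_eq, mul_comm] at h
  rw [ENNReal.ofReal_one, one_mul, ← ENNReal.mul_rpow_of_nonneg _ _ (by norm_num), one_div,
    ENNReal.le_rpow_inv_iff two_pos, ENNReal.rpow_two]
  exact h
end

section
/- Any u₀ ∈ L¹(ℝ, (1+|x|^{N+1})dx) can be decomposed as u₀ = ∑_{j=0}^N ((−1)^j/j!)(∫ x^j u₀ dx) ∂_x^j δ + ∂_x^{N+1} F_{N+1} in the sense of distributions, where F_{N+1} ∈ L¹(ℝ) satisfies ‖F_{N+1}‖_{L¹} ≤ ‖ |x|^{N+1} u₀ ‖_{L¹}. -/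
/-!
Taylor's formula with integral remainder at `0` gives
`φ x = ∑_{j ≤ N} x^j φ^{(j)}(0) / j! + ∫_0^x (x - t)^N / N! φ^{(N+1)}(t) dt`.
Integrating against `u₀`, the polynomial part produces the moments, and Fubini moves the
remainder onto `φ^{(N+1)}`: it becomes `∫ G φ^{(N+1)}` with `G t = ∫ K(x, t) u₀ x dx`, where
`K(x, t) = ± (x - t)^N / N!` for `t` between `0` and `x` and vanishes otherwise. Since
`∫ |K(x, t)| dt ≤ |x|^{N+1} / N!`, the function `F = (-1)^{N+1} G` is integrable with
`‖F‖₁ ≤ ‖|x|^{N+1} u₀‖₁`.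
-/

open MeasureTheory Real Finset

theorem MeasureTheory.Integrable.mul_of_abs_le_abs {α : Type*} [MeasurableSpace α]
    {μ : Measure α} {ρ w u : α → ℝ} (h : Integrable (fun x => ρ x * u x) μ) (hρ : AEMeasurable ρ μ)
    (hw : AEMeasurable w μ) (hle : ∀ x, |w x| ≤ |ρ x|) :
    Integrable (fun x => w x * u x) μ := by
  have hquot : ∀ x, ‖w x / ρ x‖ ≤ 1 := fun x => by
    rw [Real.norm_eq_abs, abs_div]
    exact div_le_one_of_le₀ (hle x) (abs_nonneg _)
  refine (h.bdd_mul (hw.div hρ).aestronglyMeasurable (ae_of_all _ hquot)).congr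
    (ae_of_all _ fun x => ?_)
  rcases eq_or_ne (ρ x) 0 with hx | hx
  · have : w x = 0 := abs_nonpos_iff.mp (by simpa [hx] using hle x)
    simp [hx, this]
  · simp only [Pi.div_apply]
    field_simp

theorem abs_pow_le_one_add_abs_pow {j n : ℕ} (hj : j ≤ n) (x : ℝ) : |x| ^ j ≤ 1 + |x| ^ n := by
  rcases le_total |x| 1 with hx | hx
  · linarith [pow_le_one₀ (abs_nonneg x) hx (n := j), pow_nonneg (abs_nonneg x) n]
  · linarith [pow_le_pow_right₀ hx hj]

section weighted

variable {n : ℕ} {u : ℝ → ℝ}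

theorem integrable_mul_of_integrable_one_add_abs_pow_mul
    (h : Integrable fun x => (1 + |x| ^ n) * u x) {w : ℝ → ℝ} (hw : Continuous w)
    (hle : ∀ x, |w x| ≤ 1 + |x| ^ n) : Integrable fun x => w x * u x :=
  h.mul_of_abs_le_abs (by fun_prop) hw.aemeasurable fun x => (hle x).trans (le_abs_self _)

theorem integrable_pow_mul_of_integrable_one_add_abs_pow_mul
    (h : Integrable fun x => (1 + |x| ^ n) * u x) {j : ℕ} (hj : j ≤ n) :
    Integrable fun x => x ^ j * u x :=
  integrable_mul_of_integrable_one_add_abs_pow_mul h (continuous_pow j) fun x => by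
    rw [abs_pow]; exact abs_pow_le_one_add_abs_pow hj x

theorem integrable_abs_pow_mul_of_integrable_one_add_abs_pow_mul
    (h : Integrable fun x => (1 + |x| ^ n) * u x) : Integrable fun x => |x| ^ n * u x :=
  integrable_mul_of_integrable_one_add_abs_pow_mul h (by fun_prop) fun x => by simp

theorem aestronglyMeasurable_of_integrable_one_add_abs_pow_mul
    (h : Integrable fun x => (1 + |x| ^ n) * u x) : AEStronglyMeasurable u := by
  simpa using
    (integrable_pow_mul_of_integrable_one_add_abs_pow_mul h n.zero_le).aestronglyMeasurable

end weighted

theorem taylor_integral_remainder_of_contDiff {F : Type*} [NormedAddCommGroup F]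
    [NormedSpace ℝ F] [CompleteSpace F] {f : ℝ → F} {n : ℕ} (hf : ContDiff ℝ (n + 1) f)
    (x₀ x : ℝ) :
    f x = ∑ j ∈ range (n + 1), ((x - x₀) ^ j / j.factorial) • iteratedDeriv j f x₀ +
      ∫ t in x₀..x, ((x - t) ^ n / n.factorial) • iteratedDeriv (n + 1) f t := by
  rcases eq_or_ne x₀ x with rfl | hx
  · simp [sum_range_succ']
  have hD : ∀ k ≤ n + 1, ∀ t ∈ Set.uIcc x₀ x,
      iteratedDerivWithin k f (Set.uIcc x₀ x) t = iteratedDeriv k f t := fun k hk t ht =>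
    iteratedDerivWithin_eq_iteratedDeriv (uniqueDiffOn_uIcc hx)
      (hf.contDiffAt.of_le (mod_cast hk)) ht
  have h := taylor_integral_remainder (hf.contDiffOn (s := Set.uIcc x₀ x))
  rw [taylor_within_apply, sub_eq_iff_eq_add'] at h
  rw [h, intervalIntegral.integral_congr fun t ht => by rw [hD (n + 1) le_rfl t ht]]
  congr 1
  refine sum_congr rfl fun j hj => ?_
  rw [hD j (mem_range.mp hj).le x₀ Set.left_mem_uIcc]
  simp [div_eq_inv_mul]

theorem abs_sub_le_abs_of_mem_uIoc {x t : ℝ} (ht : t ∈ Set.uIoc 0 x) : |x - t| ≤ |x| := by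
  rcases le_total 0 x with hx | hx
  · rw [Set.uIoc_of_le hx] at ht
    rw [abs_of_nonneg (by linarith [ht.2]), abs_of_nonneg hx]
    linarith [ht.1]
  · rw [Set.uIoc_of_ge hx] at ht
    rw [abs_of_nonpos (by linarith [ht.1]), abs_of_nonpos hx]
    linarith [ht.2]

theorem measurableSet_setOf_snd_mem_uIoc :
    MeasurableSet {p : ℝ × ℝ | p.2 ∈ Set.uIoc 0 p.1} := by
  simp only [Set.uIoc, Set.mem_Ioc, Set.ofPred_and]
  exact (measurableSet_lt (by fun_prop) (by fun_prop)).inter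
    (measurableSet_le (by fun_prop) (by fun_prop))

noncomputable def taylorKernel (n : ℕ) (x t : ℝ) : ℝ :=
  (if 0 ≤ x then 1 else -1) * (Set.uIoc 0 x).indicator (fun s => (x - s) ^ n / n.factorial) t

namespace taylorKernel

theorem integral_mul (n : ℕ) (x : ℝ) (g : ℝ → ℝ) :
    ∫ t, taylorKernel n x t * g t = ∫ t in 0..x, (x - t) ^ n / n.factorial * g t := by
  simp only [taylorKernel, mul_assoc, integral_const_mul, ← Set.indicator_mul_left,
    integral_indicator measurableSet_uIoc, intervalIntegral.intervalIntegral_eq_integral_uIoc,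
    smul_eq_mul]

theorem abs_le (n : ℕ) (x t : ℝ) :
    |taylorKernel n x t| ≤ (Set.uIoc 0 x).indicator (fun _ => |x| ^ n / n.factorial) t := by
  by_cases ht : t ∈ Set.uIoc 0 x
  · have hsign : |(if 0 ≤ x then 1 else -1 : ℝ)| = 1 := by split_ifs <;> simp
    have := abs_sub_le_abs_of_mem_uIoc ht
    simp only [taylorKernel, Set.indicator_of_mem ht, abs_mul, hsign, one_mul, abs_div, abs_pow,
      Nat.abs_cast]
    gcongr
  · simp [taylorKernel, Set.indicator_of_notMem ht]

theorem measurable_uncurry (n : ℕ) : Measurable (Function.uncurry (taylorKernel n)) :=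
  (Measurable.ite (measurableSet_le measurable_const measurable_fst) measurable_const
    measurable_const).mul ((Measurable.indicator (by fun_prop) measurableSet_setOf_snd_mem_uIoc))

theorem integrable (n : ℕ) (x : ℝ) : Integrable (taylorKernel n x) :=
  ((Continuous.integrableOn_uIoc (by fun_prop)).integrable_indicator
    measurableSet_uIoc).const_mul _

theorem integral_abs_le (n : ℕ) (x : ℝ) :
    ∫ t, |taylorKernel n x t| ≤ |x| ^ (n + 1) / n.factorial := by
  have hvol : volume.real (Set.uIoc 0 x) = |x| := by
    rw [measureReal_def, Real.volume_uIoc, sub_zero, ENNReal.toReal_ofReal (abs_nonneg x)]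
  calc ∫ t, |taylorKernel n x t|
      ≤ ∫ t, (Set.uIoc 0 x).indicator (fun _ => |x| ^ n / n.factorial) t :=
        integral_mono (integrable n x).abs
          ((integrableOn_const (by simp [Real.volume_uIoc])).integrable_indicator
            measurableSet_uIoc) (abs_le n x)
    _ = |x| ^ (n + 1) / n.factorial := by
        rw [integral_indicator_const _ measurableSet_uIoc, smul_eq_mul, hvol, pow_succ]
        ring

end taylorKernel

/-- `(-1) ^ (n + 1) * momentRemainder n u` is the function `F_{n+1}` of the decomposition. -/
noncomputable def momentRemainder (n : ℕ) (u : ℝ → ℝ) (t : ℝ) : ℝ :=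
  ∫ x, u x * taylorKernel n x t

section momentRemainder

variable {n : ℕ} {u : ℝ → ℝ}

theorem integrable_mul_taylorKernel (hu : AEStronglyMeasurable u)
    (hmom : Integrable fun x => |x| ^ (n + 1) * u x) :
    Integrable (fun p : ℝ × ℝ => u p.1 * taylorKernel n p.1 p.2) (volume.prod volume) := by
  have hm : AEStronglyMeasurable (fun p : ℝ × ℝ => u p.1 * taylorKernel n p.1 p.2)
      (volume.prod volume) :=
    hu.comp_fst.mul (taylorKernel.measurable_uncurry n).aestronglyMeasurable
  refine (integrable_prod_iff hm).mpr ⟨ae_of_all _ fun x => ?_, ?_⟩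
  · exact (taylorKernel.integrable n x).const_mul (u x)
  refine (hmom.norm.div_const n.factorial).mono' hm.norm.integral_prod_right'
    (ae_of_all _ fun x => ?_)
  calc ‖∫ t, ‖u x * taylorKernel n x t‖‖ = |u x| * ∫ t, |taylorKernel n x t| := by
        simp only [norm_mul, Real.norm_eq_abs, integral_const_mul, abs_abs,
          abs_of_nonneg (integral_nonneg fun _ => abs_nonneg _)]
    _ ≤ |u x| * (|x| ^ (n + 1) / n.factorial) := by
        gcongr
        exact taylorKernel.integral_abs_le n x
    _ = ‖|x| ^ (n + 1) * u x‖ / n.factorial := by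
        rw [Real.norm_eq_abs, abs_mul, abs_pow, abs_abs]
        ring

theorem integrable_momentRemainder (hu : AEStronglyMeasurable u)
    (hmom : Integrable fun x => |x| ^ (n + 1) * u x) : Integrable (momentRemainder n u) :=
  (integrable_mul_taylorKernel hu hmom).integral_prod_right

theorem integral_abs_momentRemainder_le (hu : AEStronglyMeasurable u)
    (hmom : Integrable fun x => |x| ^ (n + 1) * u x) :
    ∫ t, |momentRemainder n u t| ≤ (∫ x, |x| ^ (n + 1) * |u x|) / n.factorial := by
  have hK := (integrable_mul_taylorKernel hu hmom).abs
  calc ∫ t, |momentRemainder n u t|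
      ≤ ∫ t, ∫ x, |u x * taylorKernel n x t| :=
        integral_mono (integrable_momentRemainder hu hmom).abs hK.integral_prod_right
          fun t => abs_integral_le_integral_abs
    _ = ∫ x, |u x| * ∫ t, |taylorKernel n x t| := by
        rw [← integral_integral_swap (f := fun x t => |u x * taylorKernel n x t|) hK]
        simp only [abs_mul, integral_const_mul]
    _ ≤ ∫ x, |x| ^ (n + 1) * |u x| / n.factorial := by
        refine integral_mono
          (by simpa only [abs_mul, integral_const_mul] using hK.integral_prod_left)
          ((hmom.abs.div_const (n.factorial : ℝ)).congr (ae_of_all _ fun x => by simp [abs_mul]))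
          fun x => ?_
        calc |u x| * ∫ t, |taylorKernel n x t|
            ≤ |u x| * (|x| ^ (n + 1) / n.factorial) :=
              mul_le_mul_of_nonneg_left (taylorKernel.integral_abs_le n x) (abs_nonneg _)
          _ = |x| ^ (n + 1) * |u x| / n.factorial := by ring
    _ = (∫ x, |x| ^ (n + 1) * |u x|) / n.factorial := integral_div _ _

variable {ψ : ℝ → ℝ} {C : ℝ}

theorem integrable_mul_taylorKernel_mul (hu : AEStronglyMeasurable u)
    (hmom : Integrable fun x => |x| ^ (n + 1) * u x) (hψ : AEStronglyMeasurable ψ)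
    (hC : ∀ t, ‖ψ t‖ ≤ C) :
    Integrable (fun p : ℝ × ℝ => u p.1 * taylorKernel n p.1 p.2 * ψ p.2) (volume.prod volume) :=
  (integrable_mul_taylorKernel hu hmom).mul_bdd hψ.comp_snd (ae_of_all _ fun p => hC p.2)

theorem integral_mul_taylorKernel_mul (x : ℝ) :
    ∫ t, u x * taylorKernel n x t * ψ t = u x * ∫ t in 0..x, (x - t) ^ n / n.factorial * ψ t := by
  simp only [mul_assoc, integral_const_mul, taylorKernel.integral_mul]

theorem integrable_mul_integral_taylorRemainder (hu : AEStronglyMeasurable u)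
    (hmom : Integrable fun x => |x| ^ (n + 1) * u x) (hψ : AEStronglyMeasurable ψ)
    (hC : ∀ t, ‖ψ t‖ ≤ C) :
    Integrable fun x => u x * ∫ t in 0..x, (x - t) ^ n / n.factorial * ψ t := by
  simpa only [integral_mul_taylorKernel_mul] using
    (integrable_mul_taylorKernel_mul hu hmom hψ hC).integral_prod_left

theorem integral_momentRemainder_mul (hu : AEStronglyMeasurable u)
    (hmom : Integrable fun x => |x| ^ (n + 1) * u x) (hψ : AEStronglyMeasurable ψ)
    (hC : ∀ t, ‖ψ t‖ ≤ C) :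
    ∫ t, momentRemainder n u t * ψ t =
      ∫ x, u x * ∫ t in 0..x, (x - t) ^ n / n.factorial * ψ t := by
  calc ∫ t, momentRemainder n u t * ψ t = ∫ t, ∫ x, u x * taylorKernel n x t * ψ t := by
        simp only [momentRemainder, integral_mul_const]
    _ = ∫ x, ∫ t, u x * taylorKernel n x t * ψ t :=
        (integral_integral_swap (f := fun x t => u x * taylorKernel n x t * ψ t)
          (integrable_mul_taylorKernel_mul hu hmom hψ hC)).symm
    _ = ∫ x, u x * ∫ t in 0..x, (x - t) ^ n / n.factorial * ψ t := by
        simp only [integral_mul_taylorKernel_mul]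

end momentRemainder

theorem integral_mul_eq_sum_moments_add_integral_momentRemainder {n : ℕ} {u : ℝ → ℝ}
    (h : Integrable fun x => (1 + |x| ^ (n + 1)) * u x) {φ : ℝ → ℝ}
    (hφ : ContDiff ℝ (n + 1) φ) {C : ℝ} (hC : ∀ t, ‖iteratedDeriv (n + 1) φ t‖ ≤ C) :
    ∫ x, u x * φ x =
      ∑ j ∈ range (n + 1), iteratedDeriv j φ 0 / j.factorial * (∫ x, x ^ j * u x) +
        ∫ t, momentRemainder n u t * iteratedDeriv (n + 1) φ t := by
  have hu := aestronglyMeasurable_of_integrable_one_add_abs_pow_mul h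
  have hmom := integrable_abs_pow_mul_of_integrable_one_add_abs_pow_mul h
  have hψ : Continuous (iteratedDeriv (n + 1) φ) := hφ.continuous_iteratedDeriv _ le_rfl
  have htaylor : ∀ x, u x * φ x =
      ∑ j ∈ range (n + 1), iteratedDeriv j φ 0 / j.factorial * (x ^ j * u x) +
        u x * ∫ t in 0..x, (x - t) ^ n / n.factorial * iteratedDeriv (n + 1) φ t := by
    intro x
    rw [taylor_integral_remainder_of_contDiff hφ 0 x]
    simp only [smul_eq_mul, sub_zero, mul_add, mul_sum]
    congr 1
    exact sum_congr rfl fun j _ => by ring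
  have hxj : ∀ j ∈ range (n + 1),
      Integrable fun x => iteratedDeriv j φ 0 / j.factorial * (x ^ j * u x) := fun j hj =>
    (integrable_pow_mul_of_integrable_one_add_abs_pow_mul h (mem_range.mp hj).le).const_mul _
  simp_rw [htaylor]
  rw [integral_add (integrable_finsetSum _ hxj)
    (integrable_mul_integral_taylorRemainder hu hmom hψ.aestronglyMeasurable hC),
    integral_finsetSum _ hxj, integral_momentRemainder_mul hu hmom hψ.aestronglyMeasurable hC]
  simp only [integral_const_mul]

/-- Distributions are paired with Schwartz test functions: `⟨∂_x^j δ, φ⟩ = (−1)^j φ^{(j)}(0)` and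
`⟨∂_x^{N+1} F, φ⟩ = (−1)^{N+1} ∫ F φ^{(N+1)}`. -/
theorem moment_decomposition (N : ℕ) (u₀ : ℝ → ℝ)
    (h : Integrable (fun x => (1 + |x| ^ (N + 1)) * u₀ x)) :
    ∃ F : ℝ → ℝ, Integrable F ∧
      (∫ x : ℝ, |F x|) ≤ (∫ x : ℝ, |x| ^ (N + 1) * |u₀ x|) ∧
      ∀ φ : SchwartzMap ℝ ℝ,
        (∫ x : ℝ, u₀ x * φ x) =
          (∑ j ∈ Finset.range (N + 1),
            ((-1 : ℝ) ^ j / (Nat.factorial j : ℝ)) * (∫ x : ℝ, x ^ j * u₀ x) *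
              ((-1 : ℝ) ^ j * iteratedDeriv j (fun y : ℝ => φ y) 0)) +
          (-1 : ℝ) ^ (N + 1) * ∫ x : ℝ, F x * iteratedDeriv (N + 1) (fun y : ℝ => φ y) x := by
  have hu := aestronglyMeasurable_of_integrable_one_add_abs_pow_mul h
  have hmom := integrable_abs_pow_mul_of_integrable_one_add_abs_pow_mul h
  have hsign : ∀ k : ℕ, (-1 : ℝ) ^ k * (-1) ^ k = 1 := fun k => by rw [← mul_pow]; norm_num
  refine ⟨fun t => (-1) ^ (N + 1) * momentRemainder N u₀ t,
    (integrable_momentRemainder hu hmom).const_mul _, ?_, fun φ => ?_⟩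
  · calc ∫ t, |(-1) ^ (N + 1) * momentRemainder N u₀ t|
        = ∫ t, |momentRemainder N u₀ t| := by simp [abs_mul]
      _ ≤ (∫ x, |x| ^ (N + 1) * |u₀ x|) / N.factorial := integral_abs_momentRemainder_le hu hmom
      _ ≤ ∫ x, |x| ^ (N + 1) * |u₀ x| :=
          div_le_self (integral_nonneg fun x => by positivity) (mod_cast N.factorial_pos)
  · rw [integral_mul_eq_sum_moments_add_integral_momentRemainder h (φ.smooth (N + 1))
      fun t => SchwartzMap.le_seminorm' ℝ 0 (N + 1) φ t |>.trans_eq' (by simp)]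
    congr 1
    · exact sum_congr rfl fun j _ => by
        linear_combination -(iteratedDeriv j φ 0 / j.factorial * ∫ x, x ^ j * u₀ x) * hsign j
    · simp only [mul_assoc, integral_const_mul]
      linear_combination
        -(∫ t, momentRemainder N u₀ t * iteratedDeriv (N + 1) φ t) * hsign (N + 1)
end

section
/- Let m > 2 and Φ(ξ) = (|ξ|^m − iξ|ξ|^m)/(1+|ξ|^m). Then |∂_x S(t)K_m(x)| is bounded uniformly in x by C∫_ℝ |ξ| e^{−t|ξ|^m/(1+|ξ|^m)}/(1+|ξ|^m) dξ ≤ C(1+t)^{−2/m} + C e^{−t/2}; in particular ‖∂_x S(t)K_m‖_{L^∞(ℝ)} ≤ C(1+t)^{−2/m} for all t ≥ 0, where (S(t)K_m)^(ξ) = e^{−tΦ(ξ)}/(1+|ξ|^m). -/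
open MeasureTheory Real FourierTransform Complex

/-- Phase function `Φ(ξ) = (|ξ|^m − iξ|ξ|^m)/(1+|ξ|^m)`. -/
noncomputable def phaseFn (m : ℝ) (ξ : ℝ) : ℂ :=
  (((|ξ| ^ m : ℝ) : ℂ) - Complex.I * ξ * ((|ξ| ^ m : ℝ) : ℂ)) / (1 + ((|ξ| ^ m : ℝ) : ℂ))

/-- `S(t)K_m`, defined on the Fourier side by `e^{−tΦ(ξ)}/(1+|ξ|^m)`. -/
noncomputable def semigroupKernel (m t : ℝ) : ℝ → ℂ :=
  𝓕⁻ (fun ξ : ℝ => Complex.exp (-(t : ℂ) * phaseFn m ξ) / (1 + ((|ξ| ^ m : ℝ) : ℂ)))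

/-!
Since `‖exp (-t Φ ξ)‖ = exp (-t |ξ|^m / (1 + |ξ|^m))`, differentiating under the inverse Fourier
integral bounds `|∂ₓ S(t)K_m|` by `2π ∫ |ξ| exp (-t |ξ|^m / (1 + |ξ|^m)) / (1 + |ξ|^m) dξ`.
For `|ξ| ≤ 1` the exponent is at least `t |ξ|^m / 2 ≥ (1 + t) |ξ|^m / 2 - 1/2`, and the Gamma
integral `∫₀^∞ s exp (-b s^m) ds = b^(-2/m) Γ(2/m) / m` with `b = (1 + t)/2` gives the rate
`(1 + t)^(-2/m)`. For `|ξ| > 1` the exponent is at least `t/2`, and `exp (-t/2)` times the integral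
of `|ξ| / (1 + |ξ|^m)`, finite as `m > 2`, is `O((1 + t)^(-1))`.
-/

open Set

theorem norm_deriv_fourierInv_le {E : Type*} [NormedAddCommGroup E] [NormedSpace ℂ E]
    {g : ℝ → E} (hg : Integrable g) (hg' : Integrable fun ξ : ℝ ↦ ξ • g ξ) (x : ℝ) :
    ‖deriv (𝓕⁻ g) x‖ ≤ 2 * π * ∫ ξ, |ξ| * ‖g ξ‖ := by
  have hneg : 𝓕⁻ g = fun x ↦ 𝓕 g (-x) := funext (Real.fourierInv_eq_fourier_neg g)
  have hnorm (ξ : ℝ) : ‖(-2 * π * I * ξ) • g ξ‖ = 2 * π * (|ξ| * ‖g ξ‖) := by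
    simp [norm_smul, abs_of_pos pi_pos, mul_assoc]
  rw [hneg, deriv_comp_neg, norm_neg, Real.deriv_fourier hg hg']
  calc _ ≤ ∫ ξ : ℝ, ‖(-2 * π * I * ξ) • g ξ‖ :=
        VectorFourier.norm_fourierIntegral_le_integral_norm _ _ _ _ _
    _ = 2 * π * ∫ ξ, |ξ| * ‖g ξ‖ := by simp_rw [hnorm, integral_const_mul]

theorem one_add_rpow_le_two_rpow_mul {s p : ℝ} (hs : 0 ≤ s) (hp : 1 ≤ p) :
    (1 + s) ^ p ≤ 2 ^ (p - 1) * (1 + s ^ p) := by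
  lift s to NNReal using hs
  have := NNReal.rpow_add_le_mul_rpow_add_rpow 1 s hp
  rw [NNReal.one_rpow] at this
  exact_mod_cast this

theorem integrable_one_add_abs_div_one_add_abs_rpow {m : ℝ} (hm : 2 < m) :
    Integrable fun ξ : ℝ ↦ (1 + |ξ|) / (1 + |ξ| ^ m) := by
  have hmaj : Integrable fun ξ : ℝ ↦ 2 ^ (m - 1) * (1 + ‖ξ‖) ^ (-(m - 1)) :=
    (integrable_one_add_norm (by simp; linarith)).const_mul _
  refine hmaj.mono' (Measurable.aestronglyMeasurable (by fun_prop)) (.of_forall fun ξ ↦ ?_)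
  have h1 : 0 < 1 + |ξ| := by positivity
  have h2 : 0 < 1 + |ξ| ^ m := by positivity
  have h3 : 0 < (1 + |ξ|) ^ m := by positivity
  rw [norm_div, Real.norm_of_nonneg h1.le, Real.norm_of_nonneg h2.le, Real.norm_eq_abs,
    rpow_neg h1.le, rpow_sub h1, rpow_one, inv_div, ← mul_div_assoc, div_le_div_iff₀ h2 h3]
  have := one_add_rpow_le_two_rpow_mul (abs_nonneg ξ) (by linarith : 1 ≤ m)
  nlinarith

noncomputable def semigroupSymbol (m t : ℝ) (ξ : ℝ) : ℂ :=
  Complex.exp (-(t : ℂ) * phaseFn m ξ) / (1 + ((|ξ| ^ m : ℝ) : ℂ))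

theorem re_phaseFn (m ξ : ℝ) : (phaseFn m ξ).re = |ξ| ^ m / (1 + |ξ| ^ m) := by
  rw [phaseFn, ← ofReal_one, ← ofReal_add, div_ofReal_re]
  simp

theorem norm_semigroupSymbol (m t ξ : ℝ) :
    ‖semigroupSymbol m t ξ‖ = rexp (-(t * (|ξ| ^ m / (1 + |ξ| ^ m)))) / (1 + |ξ| ^ m) := by
  have h : 0 < 1 + |ξ| ^ m := by positivity
  rw [semigroupSymbol, norm_div, norm_exp, ← ofReal_one, ← ofReal_add, norm_real,
    Real.norm_of_nonneg h.le, neg_mul, neg_re, re_ofReal_mul, re_phaseFn]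

theorem norm_semigroupSymbol_le {m t : ℝ} (ht : 0 ≤ t) (ξ : ℝ) :
    ‖semigroupSymbol m t ξ‖ ≤ (1 + |ξ| ^ m)⁻¹ := by
  rw [norm_semigroupSymbol, div_eq_mul_inv]
  refine mul_le_of_le_one_left (by positivity) (Real.exp_le_one_iff.mpr ?_)
  exact neg_nonpos.mpr (by positivity)

theorem measurable_semigroupSymbol (m t : ℝ) : Measurable (semigroupSymbol m t) := by
  unfold semigroupSymbol phaseFn
  fun_prop

theorem integrable_semigroupSymbol {m t : ℝ} (hm : 2 < m) (ht : 0 ≤ t) :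
    Integrable (semigroupSymbol m t) := by
  refine (integrable_one_add_abs_div_one_add_abs_rpow hm).mono'
    (measurable_semigroupSymbol m t).aestronglyMeasurable (.of_forall fun ξ ↦ ?_)
  calc _ ≤ (1 + |ξ| ^ m)⁻¹ := norm_semigroupSymbol_le ht ξ
    _ ≤ (1 + |ξ|) / (1 + |ξ| ^ m) := by
      rw [inv_eq_one_div]; gcongr; linarith [abs_nonneg ξ]

theorem integrable_smul_semigroupSymbol {m t : ℝ} (hm : 2 < m) (ht : 0 ≤ t) :
    Integrable fun ξ : ℝ ↦ ξ • semigroupSymbol m t ξ := by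
  refine (integrable_one_add_abs_div_one_add_abs_rpow hm).mono'
    (measurable_id.smul (measurable_semigroupSymbol m t)).aestronglyMeasurable
    (.of_forall fun ξ ↦ ?_)
  calc _ = |ξ| * ‖semigroupSymbol m t ξ‖ := by rw [norm_smul, Real.norm_eq_abs]
    _ ≤ |ξ| * (1 + |ξ| ^ m)⁻¹ := by gcongr; exact norm_semigroupSymbol_le ht ξ
    _ ≤ (1 + |ξ|) / (1 + |ξ| ^ m) := by
      rw [← div_eq_mul_inv]; gcongr; linarith

theorem exp_neg_half_le_two_mul_one_add_rpow_neg {q t : ℝ} (hq : q ≤ 1) (ht : 0 ≤ t) :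
    rexp (-(t / 2)) ≤ 2 * (1 + t) ^ (-q) := by
  have h1 : (1 + t) ^ q ≤ 1 + t := by
    simpa using rpow_le_rpow_of_exponent_le (by linarith : 1 ≤ 1 + t) hq
  have h2 : 1 + t ≤ 2 * rexp (t / 2) := by linarith [Real.add_one_le_exp (t / 2)]
  rw [Real.exp_neg, rpow_neg (by linarith), ← div_eq_mul_inv, le_div_iff₀ (by positivity),
    inv_mul_le_iff₀ (Real.exp_pos _)]
  linarith

theorem mul_exp_neg_mul_div_one_add_rpow_le {m t s : ℝ} (hm : 0 ≤ m) (ht : 0 ≤ t) (hs : 0 ≤ s) :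
    s * (rexp (-(t * (s ^ m / (1 + s ^ m)))) / (1 + s ^ m)) ≤
      rexp (1 / 2) * (s ^ (1 : ℝ) * rexp (-((1 + t) / 2) * s ^ m)) +
        rexp (-(t / 2)) * (s / (1 + s ^ m)) := by
  have hsm : 0 ≤ s ^ m := rpow_nonneg hs m
  have hB : 0 ≤ rexp (-(t / 2)) * (s / (1 + s ^ m)) := by positivity
  have hA : 0 ≤ rexp (1 / 2) * (s ^ (1 : ℝ) * rexp (-((1 + t) / 2) * s ^ m)) := by positivity
  rcases le_or_gt s 1 with hs1 | hs1
  · have hsm1 : s ^ m ≤ 1 := rpow_le_one hs hs1 hm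
    have hr : s ^ m / 2 ≤ s ^ m / (1 + s ^ m) :=
      div_le_div_of_nonneg_left hsm (by positivity) (by linarith)
    have hE : rexp (-(t * (s ^ m / (1 + s ^ m)))) / (1 + s ^ m) ≤
        rexp (1 / 2) * rexp (-((1 + t) / 2) * s ^ m) := calc
      _ ≤ rexp (-(t * (s ^ m / (1 + s ^ m)))) := div_le_self (Real.exp_nonneg _) (by linarith)
      _ ≤ rexp (1 / 2 + -((1 + t) / 2) * s ^ m) := by
        gcongr; nlinarith [mul_le_mul_of_nonneg_left hr ht]
      _ = _ := Real.exp_add _ _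
    calc _ ≤ s * (rexp (1 / 2) * rexp (-((1 + t) / 2) * s ^ m)) := by gcongr
      _ ≤ _ := by rw [rpow_one]; linarith
  · have hsm1 : 1 ≤ s ^ m := one_le_rpow hs1.le hm
    have hr : 1 / 2 ≤ s ^ m / (1 + s ^ m) := by
      rw [le_div_iff₀ (by positivity)]; linarith
    calc _ = rexp (-(t * (s ^ m / (1 + s ^ m)))) * (s / (1 + s ^ m)) := by ring
      _ ≤ rexp (-(t / 2)) * (s / (1 + s ^ m)) := by
        gcongr; nlinarith [mul_le_mul_of_nonneg_left hr ht]
      _ ≤ _ := by linarith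

theorem integrableOn_Ioi_div_one_add_rpow {m : ℝ} (hm : 2 < m) :
    IntegrableOn (fun s : ℝ ↦ s / (1 + s ^ m)) (Ioi 0) := by
  refine (integrable_one_add_abs_div_one_add_abs_rpow hm).integrableOn.mono'
    (Measurable.aestronglyMeasurable (by fun_prop)) ?_
  filter_upwards [ae_restrict_mem measurableSet_Ioi] with s (hs : 0 < s)
  rw [abs_of_pos hs, Real.norm_of_nonneg (by positivity)]
  gcongr
  linarith

theorem setIntegral_Ioi_mul_exp_neg_mul_div_one_add_rpow_le {m t : ℝ} (hm : 2 < m) (ht : 0 ≤ t) :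
    ∫ s in Ioi 0, s * (rexp (-(t * (s ^ m / (1 + s ^ m)))) / (1 + s ^ m)) ≤
      rexp (1 / 2) * (((1 + t) / 2) ^ (-(2 / m)) * (1 / m) * Real.Gamma (2 / m)) +
        rexp (-(t / 2)) * ∫ s in Ioi 0, s / (1 + s ^ m) := by
  have hA : IntegrableOn (fun s : ℝ ↦ s ^ (1 : ℝ) * rexp (-((1 + t) / 2) * s ^ m)) (Ioi 0) :=
    integrableOn_rpow_mul_exp_neg_mul_rpow (by norm_num) (by linarith) (by positivity)
  have hB := integrableOn_Ioi_div_one_add_rpow hm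
  have hGamma : ∫ s in Ioi 0, s ^ (1 : ℝ) * rexp (-((1 + t) / 2) * s ^ m) =
      ((1 + t) / 2) ^ (-(2 / m)) * (1 / m) * Real.Gamma (2 / m) := by
    rw [_root_.integral_rpow_mul_exp_neg_mul_rpow (by linarith) (by norm_num) (by positivity)]
    norm_num [neg_div]
  calc _ ≤ ∫ s in Ioi 0, rexp (1 / 2) * (s ^ (1 : ℝ) * rexp (-((1 + t) / 2) * s ^ m)) +
        rexp (-(t / 2)) * (s / (1 + s ^ m)) := by
        refine integral_mono_of_nonneg ?_ ((hA.const_mul _).add (hB.const_mul _)) ?_ <;>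
          filter_upwards [ae_restrict_mem measurableSet_Ioi] with s (hs : 0 < s)
        · positivity
        · exact mul_exp_neg_mul_div_one_add_rpow_le (by linarith) ht hs.le
    _ = _ := by
      rw [integral_add (hA.const_mul _) (hB.const_mul _), integral_const_mul, integral_const_mul,
        hGamma]

theorem integral_abs_mul_norm_semigroupSymbol_le {m : ℝ} (hm : 2 < m) :
    ∃ C > 0, ∀ t : ℝ, 0 ≤ t →
      ∫ ξ, |ξ| * ‖semigroupSymbol m t ξ‖ ≤ C * (1 + t) ^ (-(2 / m)) := by
  set J := ∫ s in Ioi (0 : ℝ), s / (1 + s ^ m)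
  have hJ : 0 ≤ J := setIntegral_nonneg measurableSet_Ioi fun s (hs : 0 < s) ↦ by positivity
  have hΓ : 0 < Real.Gamma (2 / m) := Real.Gamma_pos_of_pos (by positivity)
  refine ⟨2 * (rexp (1 / 2) * (2 ^ (2 / m) * (1 / m) * Real.Gamma (2 / m)) + 2 * J),
    by positivity, fun t ht ↦ ?_⟩
  have hradial : ∫ ξ, |ξ| * ‖semigroupSymbol m t ξ‖ =
      2 * ∫ s in Ioi 0, s * (rexp (-(t * (s ^ m / (1 + s ^ m)))) / (1 + s ^ m)) := by
    simp_rw [norm_semigroupSymbol]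
    exact integral_comp_abs (f := fun s ↦ s * (rexp (-(t * (s ^ m / (1 + s ^ m)))) / (1 + s ^ m)))
  have hscale : ((1 + t) / 2) ^ (-(2 / m)) = 2 ^ (2 / m) * (1 + t) ^ (-(2 / m)) := by
    rw [div_rpow (by linarith) zero_le_two, rpow_neg zero_le_two, div_eq_mul_inv, inv_inv,
      mul_comm]
  have hexp : rexp (-(t / 2)) * J ≤ 2 * (1 + t) ^ (-(2 / m)) * J :=
    mul_le_mul_of_nonneg_right
      (exp_neg_half_le_two_mul_one_add_rpow_neg ((div_le_one (by linarith)).mpr hm.le) ht) hJ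
  calc _ = _ := hradial
    _ ≤ 2 * (rexp (1 / 2) * (((1 + t) / 2) ^ (-(2 / m)) * (1 / m) * Real.Gamma (2 / m)) +
        rexp (-(t / 2)) * J) := by
      gcongr
      exact setIntegral_Ioi_mul_exp_neg_mul_div_one_add_rpow_le hm ht
    _ ≤ _ := by rw [hscale]; linarith

theorem semigroupKernel_deriv_sup_decay (m : ℝ) (hm : 2 < m) :
    ∃ C > 0, ∀ t : ℝ, 0 ≤ t →
      eLpNorm (deriv (semigroupKernel m t)) ⊤ volume ≤
        ENNReal.ofReal (C * (1 + t) ^ (-(2 / m))) := by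
  obtain ⟨C, hC, hbound⟩ := integral_abs_mul_norm_semigroupSymbol_le hm
  refine ⟨2 * π * C, by positivity, fun t ht ↦ ?_⟩
  rw [eLpNorm_exponent_top]
  refine eLpNormEssSup_le_of_ae_bound (.of_forall fun x ↦ ?_)
  calc ‖deriv (semigroupKernel m t) x‖
      ≤ 2 * π * ∫ ξ, |ξ| * ‖semigroupSymbol m t ξ‖ :=
        norm_deriv_fourierInv_le (integrable_semigroupSymbol hm ht)
          (integrable_smul_semigroupSymbol hm ht) x
    _ ≤ 2 * π * (C * (1 + t) ^ (-(2 / m))) := by gcongr; exact hbound t ht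
    _ = _ := by ring
end
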